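/- arXiv:2603.13459 — 3 statements merged into one kernel-verified Lean document; each statement's English description precedes it below -/
import Mathlib

section
/- Closed form of the task representation under simplified linear self-attention (Proposition 3.9): Fix d, n ∈ ℕ with n ≥ 1. Let φ(x₁), …, φ(x_n), φ(x_q) ∈ ℝ^d and y₁, …, y_n ∈ ℝ, and form the matrix Z ∈ ℝ^{(d+1)×(n+1)} whose i-th column is (φ(x_i), y_i) for 1 ≤ i ≤ n and whose last column is (φ(x_q), 0). Define LSA(Z) = Z + (1/n)·W_OV · Z · Zᵀ · W_KQ · Z, where W_OV ∈ ℝ^{(d+1)×(d+1)} is any matrix whose bottom row equals (0_dᵀ, 1), and W_KQ ∈ ℝ^{(d+1)×(d+1)} is block diagonal of the form [[Θ, 0_d], [0_dᵀ, c]] for some Θ ∈ ℝ^{d×d} and c ∈ ℝ. Then the bottom-right entry of LSA(Z) (the prediction ŷ) equals (1/n)·Σ_{i=1}^n y_i · φ(x_i)ᵀ Θ φ(x_q) = ⟨ω_f, φ(x_q)⟩, where ω_f = (1/n)·Σ_{i=1}^n y_i · Θᵀ φ(x_i). -/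
/-!
The bottom row `(0, 1)` of `W_OV` reads off the label row of `Z Zᵀ W_KQ Z`, so the prediction is
`(1/n) Σ_j y_j ⟨z_j, W_KQ z_q⟩` over all columns `z_j` of `Z`; the query column contributes nothing
because its label is `0`. Since the label of `z_q` is `0` and the bottom-left block of `W_KQ`
vanishes, `⟨z_j, W_KQ z_q⟩ = φ(x_j)ᵀ Θ φ(x_q)`. The second closed form is the
first one with `Θ` moved across the inner product.
-/

open Matrix

section

variable {R : Type*} [Semiring R]

theorem Matrix.mul_apply_of_row_eq_single {l m o : Type*} [Fintype m] [DecidableEq m]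
    {A : Matrix l m R} {i : l} {k : m} (hA : A i = Pi.single k 1) (M : Matrix m o R) (j : o) :
    (A * M) i j = M k j := by
  rw [mul_apply', hA, single_dotProduct, one_mul]

theorem Matrix.transpose_mul_mul_self_apply {m o : Type*} [Fintype m] [Fintype o]
    (A : Matrix m o R) (B : Matrix m m R) (i j : o) :
    (Aᵀ * B * A) i j = Aᵀ i ⬝ᵥ B *ᵥ Aᵀ j := by
  rw [mul_apply', dotProduct_mulVec]
  rfl

theorem Fin.snoc_dotProduct_mulVec_snoc_zero {d : ℕ} {W : Matrix (Fin (d + 1)) (Fin (d + 1)) R}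
    {Θ : Matrix (Fin d) (Fin d) R} (hΘ : ∀ i j : Fin d, W i.castSucc j.castSucc = Θ i j)
    (hW : ∀ j : Fin d, W (Fin.last d) j.castSucc = 0) (u v : Fin d → R) (a : R) :
    (Fin.snoc u a : Fin (d + 1) → R) ⬝ᵥ W *ᵥ Fin.snoc v 0 = u ⬝ᵥ Θ *ᵥ v := by
  simp [dotProduct, mulVec, Fin.sum_univ_castSucc, hΘ, hW]

end

theorem lsa_closed_form_general
    (d n : ℕ)
    (φx : Fin n → (Fin d → ℝ)) (y : Fin n → ℝ) (xq : Fin d → ℝ)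
    (Θ : Matrix (Fin d) (Fin d) ℝ) (c : ℝ)
    (Z : Matrix (Fin (d + 1)) (Fin (n + 1)) ℝ)
    (hZ : ∀ (i : Fin (d + 1)) (j : Fin (n + 1)),
      Z i j =
        if hj : (j : ℕ) < n then
          (if hi : (i : ℕ) < d then φx ⟨j, hj⟩ ⟨i, hi⟩ else y ⟨j, hj⟩)
        else
          (if hi : (i : ℕ) < d then xq ⟨i, hi⟩ else 0))
    (W_OV W_KQ : Matrix (Fin (d + 1)) (Fin (d + 1)) ℝ)
    (hOV : ∀ j : Fin (d + 1), W_OV (Fin.last d) j = if (j : ℕ) < d then 0 else 1)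
    (hKQ : ∀ i j : Fin (d + 1),
      W_KQ i j =
        if hi : (i : ℕ) < d then
          (if hj : (j : ℕ) < d then Θ ⟨i, hi⟩ ⟨j, hj⟩ else 0)
        else
          (if (j : ℕ) < d then 0 else c)) :
    (Z + (n : ℝ)⁻¹ • (W_OV * Z * Zᵀ * W_KQ * Z)) (Fin.last d) (Fin.last n)
        = (n : ℝ)⁻¹ * ∑ i : Fin n, y i * (φx i ⬝ᵥ Θ.mulVec xq) ∧
    (Z + (n : ℝ)⁻¹ • (W_OV * Z * Zᵀ * W_KQ * Z)) (Fin.last d) (Fin.last n)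
        = ((n : ℝ)⁻¹ • ∑ i : Fin n, y i • Θᵀ.mulVec (φx i)) ⬝ᵥ xq := by
  have hcol : ∀ j : Fin n, Zᵀ j.castSucc = Fin.snoc (φx j) (y j) := fun j ↦ by
    ext i; induction i using Fin.lastCases <;> simp [hZ]
  have hquery : Zᵀ (Fin.last n) = Fin.snoc xq 0 := by
    ext i; induction i using Fin.lastCases <;> simp [hZ]
  have hOV_row : W_OV (Fin.last d) = Pi.single (Fin.last d) 1 := by
    ext j; induction j using Fin.lastCases <;> simp [hOV]
  have hΘ : ∀ i j : Fin d, W_KQ i.castSucc j.castSucc = Θ i j := by simp [hKQ]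
  have hKQ_bot : ∀ j : Fin d, W_KQ (Fin.last d) j.castSucc = 0 := by simp [hKQ]
  have hpred : (Z + (n : ℝ)⁻¹ • (W_OV * Z * Zᵀ * W_KQ * Z)) (Fin.last d) (Fin.last n)
      = (n : ℝ)⁻¹ * ∑ i : Fin n, y i * (φx i ⬝ᵥ Θ.mulVec xq) := by
    have hZqq : Z (Fin.last d) (Fin.last n) = 0 := by
      simpa using congrFun hquery (Fin.last d)
    have hassoc : W_OV * Z * Zᵀ * W_KQ * Z = W_OV * (Z * (Zᵀ * W_KQ * Z)) := by
      simp only [Matrix.mul_assoc]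
    rw [Matrix.add_apply, Matrix.smul_apply, hZqq, zero_add, smul_eq_mul, hassoc,
      mul_apply_of_row_eq_single hOV_row, mul_apply,
      Fin.sum_univ_castSucc, hZqq, zero_mul, add_zero]
    congr 1
    refine Finset.sum_congr rfl fun j _ ↦ ?_
    have hZy : Z (Fin.last d) j.castSucc = y j := by simpa using congrFun (hcol j) (Fin.last d)
    rw [hZy, transpose_mul_mul_self_apply, hcol, hquery,
      Fin.snoc_dotProduct_mulVec_snoc_zero hΘ hKQ_bot]
  refine ⟨hpred, hpred.trans ?_⟩
  simp only [smul_dotProduct, sum_dotProduct, mulVec_transpose, dotProduct_mulVec, smul_eq_mul]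

/-- Closed form of the task representation under simplified linear self-attention
(Proposition 3.9). With `Z` the prompt embedding matrix (columns `(φ(x_i), y_i)` and
final column `(φ(x_q), 0)`), `W_OV` any matrix with bottom row `(0_dᵀ, 1)`, and
`W_KQ = [[Θ, 0], [0, c]]` block diagonal, the bottom-right entry of
`LSA(Z) = Z + (1/n) • W_OV * Z * Zᵀ * W_KQ * Z` equals
`(1/n) Σ_i y_i · φ(x_i)ᵀ Θ φ(x_q) = ⟨ω_f, φ(x_q)⟩` with
`ω_f = (1/n) Σ_i y_i • Θᵀ φ(x_i)`. -/
theorem lsa_closed_form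
    (d n : ℕ) (hn : 1 ≤ n)
    (φx : Fin n → (Fin d → ℝ)) (y : Fin n → ℝ) (xq : Fin d → ℝ)
    (Θ : Matrix (Fin d) (Fin d) ℝ) (c : ℝ)
    (Z : Matrix (Fin (d + 1)) (Fin (n + 1)) ℝ)
    (hZ : ∀ (i : Fin (d + 1)) (j : Fin (n + 1)),
      Z i j =
        if hj : (j : ℕ) < n then
          (if hi : (i : ℕ) < d then φx ⟨j, hj⟩ ⟨i, hi⟩ else y ⟨j, hj⟩)
        else
          (if hi : (i : ℕ) < d then xq ⟨i, hi⟩ else 0))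
    (W_OV W_KQ : Matrix (Fin (d + 1)) (Fin (d + 1)) ℝ)
    (hOV : ∀ j : Fin (d + 1), W_OV (Fin.last d) j = if (j : ℕ) < d then 0 else 1)
    (hKQ : ∀ i j : Fin (d + 1),
      W_KQ i j =
        if hi : (i : ℕ) < d then
          (if hj : (j : ℕ) < d then Θ ⟨i, hi⟩ ⟨j, hj⟩ else 0)
        else
          (if (j : ℕ) < d then 0 else c)) :
    (Z + (n : ℝ)⁻¹ • (W_OV * Z * Zᵀ * W_KQ * Z)) (Fin.last d) (Fin.last n)
        = (n : ℝ)⁻¹ * ∑ i : Fin n, y i * (φx i ⬝ᵥ Θ.mulVec xq) ∧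
    (Z + (n : ℝ)⁻¹ • (W_OV * Z * Zᵀ * W_KQ * Z)) (Fin.last d) (Fin.last n)
        = ((n : ℝ)⁻¹ • ∑ i : Fin n, y i • Θᵀ.mulVec (φx i)) ⬝ᵥ xq :=
  lsa_closed_form_general d n φx y xq Θ c Z hZ W_OV W_KQ hOV hKQ
end

section
/- Linear independence of the logistic family (Step 2 of the proof of Theorem 3.10): Fix a real number a ≠ 0. For t > 0 define f_t : ℝ → ℝ by f_t(x) = 1/(1 + t·exp(−a·x)). Then for any pairwise distinct positive reals t₁, …, t_m, the functions f_{t₁}, …, f_{t_m} are linearly independent in the real vector space of functions ℝ → ℝ: if λ₁, …, λ_m ∈ ℝ satisfy Σ_{i=1}^m λ_i · f_{t_i}(x) = 0 for all x ∈ ℝ, then λ_i = 0 for all i. -/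
/-!
Substituting `u = exp (-a x)`, which ranges over all of `(0, ∞)` because `a ≠ 0`, the relation
becomes `∑ λᵢ / (1 + tᵢ u) = 0` for `u > 0`. Clearing denominators gives a polynomial identity
`∑ λᵢ ∏_{j ≠ i} (1 + tⱼ u) = 0` on an infinite set, hence for every `u`; at `u = -1/tᵢ` every
summand but the `i`-th vanishes, and the `i`-th is `λᵢ` times a product that is nonzero because
the `tⱼ` are distinct.
-/

open Real Polynomial Finset

section ClearingDenominators

variable {K ι : Type*} [Field K] [Fintype ι] [DecidableEq ι]

theorem sum_div_mul_prod_eq_sum_mul_prod_erase (f d : ι → K) (hd : ∀ i, d i ≠ 0) :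
    (∑ i, f i / d i) * ∏ j, d j = ∑ i, f i * ∏ j ∈ univ.erase i, d j := by
  rw [sum_mul]
  refine sum_congr rfl fun i _ => ?_
  rw [← mul_prod_erase univ d (mem_univ i), div_mul_eq_mul_div, mul_left_comm,
    mul_div_cancel_left₀ _ (hd i)]

noncomputable def clearedNumerator (lam t : ι → K) : K[X] :=
  ∑ i, C (lam i) * ∏ j ∈ univ.erase i, (1 + C (t j) * X)

theorem eval_clearedNumerator (lam t : ι → K) (u : K) :
    (clearedNumerator lam t).eval u = ∑ i, lam i * ∏ j ∈ univ.erase i, (1 + t j * u) := by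
  simp [clearedNumerator, eval_finsetSum, eval_prod]

theorem prod_erase_one_add_mul_neg_inv_eq_zero_iff {t : ι → K} (htinj : Function.Injective t)
    {i : ι} (hti : t i ≠ 0) (k : ι) :
    ∏ j ∈ univ.erase k, (1 + t j * -(t i)⁻¹) = 0 ↔ k ≠ i := by
  have hroot : ∀ j, 1 + t j * -(t i)⁻¹ = 0 ↔ j = i := fun j => by
    rw [mul_neg, ← sub_eq_add_neg, sub_eq_zero, eq_comm, ← div_eq_mul_inv,
      div_eq_one_iff_eq hti, htinj.eq_iff]
  simp only [prod_eq_zero_iff, hroot, mem_erase, mem_univ, and_true, exists_eq_right, ne_comm]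

theorem eval_clearedNumerator_neg_inv {t : ι → K} (htinj : Function.Injective t) {i : ι}
    (hti : t i ≠ 0) (lam : ι → K) :
    (clearedNumerator lam t).eval (-(t i)⁻¹) =
      lam i * ∏ j ∈ univ.erase i, (1 + t j * -(t i)⁻¹) := by
  rw [eval_clearedNumerator]
  refine sum_eq_single i (fun k _ hki => ?_) (fun hi => absurd (mem_univ i) hi)
  rw [(prod_erase_one_add_mul_neg_inv_eq_zero_iff htinj hti k).2 hki, mul_zero]

theorem eq_zero_of_sum_div_one_add_mul_eq_zero {t : ι → K} (ht : ∀ i, t i ≠ 0)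
    (htinj : Function.Injective t) {S : Set K} (hS : S.Infinite)
    (hden : ∀ u ∈ S, ∀ i, 1 + t i * u ≠ 0) {lam : ι → K}
    (h : ∀ u ∈ S, ∑ i, lam i / (1 + t i * u) = 0) (i : ι) : lam i = 0 := by
  have hroots : S ⊆ {u | (clearedNumerator lam t).IsRoot u} := fun u hu => by
    simp only [Set.mem_ofPred_eq, IsRoot, eval_clearedNumerator,
      ← sum_div_mul_prod_eq_sum_mul_prod_erase _ _ (hden u hu), h u hu, zero_mul]
  have hzero : clearedNumerator lam t = 0 := eq_zero_of_infinite_isRoot _ (hS.mono hroots)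
  have hevi := eval_clearedNumerator_neg_inv htinj (ht i) lam
  rw [hzero, eval_zero, eq_comm] at hevi
  exact (mul_eq_zero.1 hevi).resolve_right
    fun hprod => (prod_erase_one_add_mul_neg_inv_eq_zero_iff htinj (ht i) i).1 hprod rfl

end ClearingDenominators

theorem exists_exp_neg_mul_eq {a : ℝ} (ha : a ≠ 0) {u : ℝ} (hu : 0 < u) :
    ∃ x, exp (-a * x) = u :=
  ⟨-log u / a, by rw [neg_mul, mul_div_cancel₀ _ ha, neg_neg, exp_log hu]⟩

theorem linearIndependent_logistic {ι : Type*} [Fintype ι] {a : ℝ} (ha : a ≠ 0) {t : ι → ℝ}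
    (ht : ∀ i, 0 < t i) (htinj : Function.Injective t) :
    LinearIndependent ℝ fun i (x : ℝ) => 1 / (1 + t i * exp (-a * x)) := by
  classical
  refine Fintype.linearIndependent_iff.2 fun lam hlam i => ?_
  refine eq_zero_of_sum_div_one_add_mul_eq_zero (fun i => (ht i).ne') htinj (Set.Ioi_infinite 0)
    (fun u hu i => (add_pos one_pos (mul_pos (ht i) hu)).ne')
    (fun u hu => ?_) i
  obtain ⟨x, rfl⟩ := exists_exp_neg_mul_eq ha hu
  simpa [div_eq_mul_inv] using congrFun hlam x

/-- Linear independence of the logistic family (Step 2 of the proof of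
Theorem 3.10): for `a ≠ 0`, the functions `f_t(x) = 1/(1 + t·e^{−ax})` for pairwise
distinct positive `t₁, …, t_m` are linearly independent as functions `ℝ → ℝ`. -/
theorem logistic_family_linearly_independent
    (a : ℝ) (ha : a ≠ 0)
    (m : ℕ) (t : Fin m → ℝ) (ht : ∀ i, 0 < t i) (htinj : Function.Injective t)
    (lam : Fin m → ℝ)
    (h : ∀ x : ℝ, ∑ i : Fin m, lam i * (1 / (1 + t i * exp (-a * x))) = 0) :
    ∀ i : Fin m, lam i = 0 :=
  Fintype.linearIndependent_iff.1 (linearIndependent_logistic ha ht htinj) lam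
    (funext fun x => by simpa using h x)
end

section
/- Infinite-dimensionality of the span of the logistic family (Step 2 of the proof of Theorem 3.10): Fix a real number a ≠ 0 and for t > 0 define f_t : ℝ → ℝ by f_t(x) = 1/(1 + t·exp(−a·x)). Then the family (f_t)_{t>0} is linearly independent in the real vector space of functions ℝ → ℝ, and consequently the linear span of {f_t | t > 0} is an infinite-dimensional subspace of the space of functions ℝ → ℝ. -/
/-!
If `∑ g k * (u - r k)⁻¹` vanishes on an infinite set, clearing denominators gives the polynomial
`∑ g k * ∏_{j ≠ k} (X - r j)`, which therefore vanishes identically; at the node `r i` only the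
term `g i * ∏_{j ≠ i} (r i - r j)` survives, so `g i = 0`. The logistic functions are
`u ↦ (1 + t * u)⁻¹` composed with the surjection `x ↦ exp (-a * x)` onto `(0, ∞)`, and
precomposition with a surjection is injective. An infinite linearly independent family cannot lie
in a finite-dimensional space.
-/

open Real Polynomial Lagrange Function

namespace Lagrange

variable {K ι : Type*} [Field K] [DecidableEq ι] {s : Finset ι} {r : ι → K} (g : ι → K)

theorem eval_sum_C_mul_nodal_erase {u : K} (hu : ∀ k ∈ s, u ≠ r k) :
    eval u (∑ k ∈ s, C (g k) * nodal (s.erase k) r) =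
      (∑ k ∈ s, g k * (u - r k)⁻¹) * eval u (nodal s r) := by
  simp only [eval_finsetSum, eval_mul, eval_C, Finset.sum_mul]
  refine Finset.sum_congr rfl fun k hk => ?_
  rw [nodal_eq_mul_nodal_erase hk, eval_mul, eval_sub, eval_X, eval_C, mul_assoc,
    inv_mul_cancel_left₀ (sub_ne_zero.mpr (hu k hk))]

theorem eval_node_sum_C_mul_nodal_erase {i : ι} (hi : i ∈ s) :
    eval (r i) (∑ k ∈ s, C (g k) * nodal (s.erase k) r) =
      g i * eval (r i) (nodal (s.erase i) r) := by
  rw [eval_finsetSum, Finset.sum_eq_single_of_mem i hi fun k _ hki => ?_, eval_mul, eval_C]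
  rw [eval_mul, eval_nodal_at_node (Finset.mem_erase.mpr ⟨Ne.symm hki, hi⟩), mul_zero]

end Lagrange

section

variable {K ι : Type*} [Field K] {S : Set K}

-- `S` may contain poles `r i`, where `(u - r i)⁻¹` is the junk value `0`; the proof only uses
-- the points of `S` off the poles.
theorem linearIndependent_inv_sub (hS : S.Infinite) {r : ι → K} (hr : Injective r) :
    LinearIndependent K (fun i (u : S) => ((u : K) - r i)⁻¹) := by
  classical
  rw [linearIndependent_iff']
  intro s g hsum i hi
  have hP : ∑ k ∈ s, C (g k) * nodal (s.erase k) r = 0 := by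
    refine eq_zero_of_infinite_isRoot _ ((hS.sdiff (s.finite_toSet.image r)).mono ?_)
    rintro u ⟨huS, hur⟩
    have hu : ∀ k ∈ s, u ≠ r k := fun k hk h => hur ⟨k, hk, h.symm⟩
    have hsum_u := congrFun hsum ⟨u, huS⟩
    simp only [Finset.sum_apply, Pi.smul_apply, smul_eq_mul, Pi.zero_apply] at hsum_u
    rw [Set.mem_ofPred_eq, IsRoot, eval_sum_C_mul_nodal_erase g hu, hsum_u, zero_mul]
  have hnode : eval (r i) (nodal (s.erase i) r) ≠ 0 :=
    eval_nodal_not_at_node fun j hj h => Finset.ne_of_mem_erase hj (hr h).symm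
  have := eval_node_sum_C_mul_nodal_erase (r := r) g hi
  rw [hP, eval_zero] at this
  exact (mul_eq_zero.mp this.symm).resolve_right hnode

theorem linearIndependent_inv_one_add_mul (hS : S.Infinite) {c : ι → K} (hc : Injective c)
    (hc0 : ∀ i, c i ≠ 0) : LinearIndependent K (fun i (u : S) => (1 + c i * u)⁻¹) := by
  have hr : Injective fun i => -(c i)⁻¹ := fun i j h => hc (by simpa using h)
  convert (linearIndependent_inv_sub hS hr).units_smul fun i => Units.mk0 (c i)⁻¹ (by simp [hc0])
    using 1
  ext i u
  change (1 + c i * u)⁻¹ = (c i)⁻¹ * ((u : K) - -(c i)⁻¹)⁻¹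
  rw [sub_neg_eq_add, ← mul_inv, mul_add, mul_inv_cancel₀ (hc0 i), add_comm]

end

theorem surjective_exp_neg_mul {a : ℝ} (ha : a ≠ 0) :
    Surjective fun x : ℝ => (⟨exp (-a * x), exp_pos _⟩ : Set.Ioi (0 : ℝ)) := by
  rintro ⟨u, hu⟩
  refine ⟨-log u / a, Subtype.ext ?_⟩
  change exp (-a * (-log u / a)) = u
  rw [show -a * (-log u / a) = log u by field_simp, exp_log hu]

/-- Infinite-dimensionality of the span of the logistic family (Step 2 of the proof
of Theorem 3.10): for `a ≠ 0`, the family `(f_t)_{t>0}` with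
`f_t(x) = 1/(1 + t·e^{−ax})` is linearly independent in the space of functions
`ℝ → ℝ`, and its span is infinite-dimensional. -/
theorem logistic_family_span_infinite_dimensional (a : ℝ) (ha : a ≠ 0) :
    LinearIndependent ℝ
      (fun t : {t : ℝ // 0 < t} => fun x : ℝ => 1 / (1 + t.1 * exp (-a * x))) ∧
    ¬ FiniteDimensional ℝ
      ↥(Submodule.span ℝ (Set.range
        (fun t : {t : ℝ // 0 < t} => fun x : ℝ => 1 / (1 + t.1 * exp (-a * x))))) := by
  have hli : LinearIndependent ℝ
      (fun t : {t : ℝ // 0 < t} => fun x : ℝ => 1 / (1 + t.1 * exp (-a * x))) := by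
    simp only [one_div]
    exact (linearIndependent_inv_one_add_mul (Set.Ioi_infinite 0) Subtype.val_injective
      fun t : {t : ℝ // 0 < t} => t.2.ne').map' _
      (LinearMap.ker_eq_bot.mpr (LinearMap.funLeft_injective_of_surjective ℝ ℝ _
        (surjective_exp_neg_mul ha)))
  have : Infinite {t : ℝ // 0 < t} := (Set.Ioi_infinite 0).to_subtype
  exact ⟨hli, fun _ =>
    Module.Finite.not_linearIndependent_of_infinite _ (linearIndependent_span hli)⟩
end
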